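/- In a dendroidally ordered set A, every edge a other than the root is a child of a unique edge x ∈ A (its parent), i.e., a occurs in x↑ for exactly one x. -/

import Mathlib

/-!
Finiteness makes descendance `≤_d` a well-founded partial order: if `x` occurred in some
`b < x`, substituting `b` for that occurrence of `x` over and over would produce infinitely
many relations `x + n • (b - x) ≤ x`. Since `z↑` dominates every `b < z`, descending from the
root through children sets ends at an edge having `a` as a child. For uniqueness, take a
`≤_d`-minimal common ancestor `z` of two parents of `a`. Simplicity forbids `a` from descending
from two distinct members of `z↑` (substituting below both would put `a` twice into one
multiset below `z`), so both parents descend from the same child of `z`, contradicting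
minimality; and a parent equal to `z` is excluded by the same argument applied inside `z↑`.
-/

/-- A (commutative) broad poset: a set `A` with a relation between the free
commutative monoid on `A` (modelled as `Multiset A`) and `A`, satisfying
broad reflexivity, transitivity and antisymmetry. -/
structure BroadPoset (A : Type) where
  le : Multiset A → A → Prop
  le_refl : ∀ a : A, le {a} a
  le_trans : ∀ (a : A) (l : List (Multiset A × A)),
      le (↑(l.map Prod.snd) : Multiset A) a → (∀ p ∈ l, le p.1 p.2) →
      le (l.map Prod.fst).sum a
  le_antisymm : ∀ a a' : A, le {a} a' → le {a'} a → a = a'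

/-- The descendance relation: `b ≤_d a` iff `b` occurs in some `b' ≤ a`. -/
def BroadPoset.descLe {A : Type} (P : BroadPoset A) (b a : A) : Prop :=
  ∃ b' : Multiset A, P.le b' a ∧ b ∈ b'

/-- Strict broad inequality `b < a`. -/
def BroadPoset.blt {A : Type} (P : BroadPoset A) (b : Multiset A) (a : A) : Prop :=
  P.le b a ∧ b ≠ {a}

/-- The induced order on `A⁺`: `s ≤ t` iff `t = t₁·…·tₙ` and `s = s₁·…·sₙ`
with `sᵢ ≤ tᵢ` for each `i`. -/
def BroadPoset.multLe {A : Type} (P : BroadPoset A) (s t : Multiset A) : Prop :=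
  ∃ l : List (Multiset A × A), (↑(l.map Prod.snd) : Multiset A) = t ∧
    (l.map Prod.fst).sum = s ∧ ∀ p ∈ l, P.le p.1 p.2

/-- A leaf: an element with `ĥa = ∅`. -/
def BroadPoset.IsLeaf {A : Type} (P : BroadPoset A) (a : A) : Prop :=
  ∀ b : Multiset A, ¬ P.blt b a

/-- `u` is the maximum of `ĥa = {b | b < a}`, i.e. `u = a↑`; its members are
the children of `a`. -/
def BroadPoset.IsChildSet {A : Type} (P : BroadPoset A) (a : A) (u : Multiset A) : Prop :=
  P.blt u a ∧ ∀ b : Multiset A, P.blt b a → P.multLe b u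

/-- `r` is the root: every element is a descendant of `r` (extremum of `≤_d`). -/
def BroadPoset.IsRoot {A : Type} (P : BroadPoset A) (r : A) : Prop :=
  ∀ a : A, P.descLe a r

/-- Monotone functions between broad posets. -/
def IsMonotone {A B : Type} (P : BroadPoset A) (Q : BroadPoset B) (f : A → B) : Prop :=
  ∀ (b : Multiset A) (a : A), P.le b a → Q.le (b.map f) (f a)

/-- A link: `b < a` such that `b ≤ b' < a` implies `b = b'`. -/
def BroadPoset.IsLink {A : Type} (P : BroadPoset A) (b : Multiset A) (a : A) : Prop :=
  P.blt b a ∧ ∀ b' : Multiset A, P.multLe b b' → P.blt b' a → b = b'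

/-- A dendroidally ordered set: a finite broad poset which is simple, has a
root, and in which every non-leaf has children. -/
structure BroadPoset.IsDendroidal {A : Type} (P : BroadPoset A) : Prop where
  finite : Set.Finite {p : Multiset A × A | P.le p.1 p.2}
  simple : ∀ (b : Multiset A) (a : A), P.le b a → b.Nodup
  root : ∃ r : A, P.IsRoot r
  children : ∀ a : A, ¬ P.IsLeaf a → ∃ u : Multiset A, P.IsChildSet a u

namespace BroadPoset

variable {A : Type} (P : BroadPoset A)

def IsFinite : Prop :=
  {p : Multiset A × A | P.le p.1 p.2}.Finite

def IsSimple : Prop :=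
  ∀ b x, P.le b x → b.Nodup

def descLt (b a : A) : Prop :=
  P.descLe b a ∧ b ≠ a

lemma le_subst [DecidableEq A] {s b : Multiset A} {c x : A} (hs : P.le s x) (hc : c ∈ s) (hb : P.le b c) :
    P.le (b + s.erase c) x := by
  have := P.le_trans x ((b, c) :: (s.erase c).toList.map fun z => ({z}, z)) (by
    simpa [Function.comp_def, ← Multiset.cons_coe, Multiset.cons_erase hc] using hs) (by
    simpa using ⟨hb, fun z _ => P.le_refl z⟩)
  simp only [List.map_cons, List.map_map, Function.comp_def, List.sum_cons] at this
  rwa [← Multiset.sum_coe, ← Multiset.map_coe, Multiset.coe_toList,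
    Multiset.sum_map_singleton] at this

lemma mem_of_multLe {b w : Multiset A} (h : P.multLe b w) {a : A} (ha : a ∈ b) :
    ∃ s c, a ∈ s ∧ P.le s c ∧ c ∈ w := by
  obtain ⟨l, rfl, rfl, hl⟩ := h
  rw [← Multiset.sum_coe] at ha
  obtain ⟨_, hs, has⟩ := Multiset.mem_join.1 ha
  obtain ⟨p, hp, rfl⟩ := List.mem_map.1 hs
  exact ⟨p.1, p.2, has, hl p hp, List.mem_map_of_mem hp⟩

lemma descLe_refl (a : A) : P.descLe a a :=
  ⟨{a}, P.le_refl a, Multiset.mem_singleton_self a⟩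

lemma descLe_trans {a b c : A} (hab : P.descLe a b) (hbc : P.descLe b c) : P.descLe a c := by
  classical
  obtain ⟨s, hs, has⟩ := hab
  obtain ⟨t, ht, hbt⟩ := hbc
  exact ⟨s + t.erase b, P.le_subst ht hbt hs, Multiset.mem_add.2 (Or.inl has)⟩

lemma descLe_of_blt_of_mem {b : Multiset A} {a x : A} (h : P.blt b x) (ha : a ∈ b) :
    P.descLe a x :=
  ⟨b, h.1, ha⟩

lemma notMem_of_blt (hfin : P.IsFinite) {b : Multiset A} {x : A} (h : P.blt b x) : x ∉ b := by
  classical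
  intro hxb
  obtain ⟨t, rfl⟩ := Multiset.exists_cons_of_mem hxb
  have ht : t ≠ 0 := by rintro rfl; exact h.2 rfl
  have hle : ∀ n : ℕ, P.le (x ::ₘ n • t) x := by
    intro n
    induction n with
    | zero => simpa using P.le_refl x
    | succ n ih =>
      simpa [succ_nsmul', add_comm] using P.le_subst ih (Multiset.mem_cons_self x _) h.1
  have hinj : Function.Injective fun n : ℕ => (x ::ₘ n • t, x) := by
    intro m n hmn
    have := congrArg (fun p => Multiset.card p.1) hmn
    simp only [Multiset.card_cons, Multiset.card_nsmul, add_left_inj] at this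
    exact Nat.eq_of_mul_eq_mul_right (Multiset.card_pos.2 ht) this
  exact Set.infinite_of_injective_forall_mem hinj hle hfin

lemma descLe_antisymm (hfin : P.IsFinite) {x y : A} (hxy : P.descLe x y) (hyx : P.descLe y x) : x = y := by
  classical
  obtain ⟨s, hs, hxs⟩ := hxy
  obtain ⟨t, ht, hyt⟩ := hyx
  by_contra hne
  refine P.notMem_of_blt hfin ⟨P.le_subst ht hyt hs, fun h => hne ?_⟩
    (Multiset.mem_add.2 (Or.inl hxs))
  have hty : t.erase y = 0 := by
    have hcard := congrArg Multiset.card h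
    rw [Multiset.card_add, Multiset.card_singleton] at hcard
    have := Multiset.card_pos_iff_exists_mem.2 ⟨x, hxs⟩
    exact Multiset.card_eq_zero.1 (by omega)
  rw [hty, add_zero] at h
  rw [← Multiset.cons_erase hyt, hty] at ht
  exact P.le_antisymm x y (h ▸ hs) ht

lemma descLt_of_blt_of_mem (hfin : P.IsFinite) {b : Multiset A} {a x : A} (h : P.blt b x) (ha : a ∈ b) : P.descLt a x :=
  ⟨P.descLe_of_blt_of_mem h ha, fun hax => P.notMem_of_blt hfin h (hax ▸ ha)⟩

lemma wellFounded_descLt (hfin : P.IsFinite) : WellFounded P.descLt := by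
  have : Finite A := by
    have := Set.Finite.to_subtype hfin
    exact Finite.of_injective
      (fun a => (⟨({a}, a), P.le_refl a⟩ : {p : Multiset A × A | P.le p.1 p.2}))
      fun a b h => congrArg (fun p => p.1.2) h
  have : IsTrans A P.descLt := ⟨fun x y z hxy hyz =>
    ⟨P.descLe_trans hxy.1 hyz.1, fun hxz => hyz.2 (P.descLe_antisymm hfin hyz.1 (hxz ▸ hxy.1))⟩⟩
  have : Std.Irrefl P.descLt := ⟨fun x h => h.2 rfl⟩
  exact Finite.wellFounded_of_trans_of_irrefl _

lemma eq_of_descLe_of_mem (hsimple : P.IsSimple) {w : Multiset A} {z a c₁ c₂ : A}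
    (hw : P.le w z) (hc₁ : c₁ ∈ w) (hc₂ : c₂ ∈ w) (h₁ : P.descLe a c₁) (h₂ : P.descLe a c₂) :
    c₁ = c₂ := by
  classical
  by_contra hne
  obtain ⟨e₁, he₁, hae₁⟩ := h₁
  obtain ⟨e₂, he₂, hae₂⟩ := h₂
  have hc₂' : c₂ ∈ w.erase c₁ := (Multiset.mem_erase_of_ne (Ne.symm hne)).2 hc₂
  have hle := P.le_subst (P.le_subst hw hc₁ he₁) (Multiset.mem_add.2 (Or.inr hc₂')) he₂
  rw [Multiset.erase_add_right_pos _ hc₂'] at hle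
  exact Multiset.disjoint_left.1 (Multiset.nodup_add.1 (hsimple _ _ hle)).2.2 hae₂
    (Multiset.mem_add.2 (Or.inl hae₁))

lemma exists_blt_of_descLt {x z : A} (hx : P.descLt x z) : ∃ d, P.blt d z ∧ x ∈ d := by
  obtain ⟨⟨d, hd, hxd⟩, hne⟩ := hx
  exact ⟨d, ⟨hd, by rintro rfl; exact hne (Multiset.mem_singleton.1 hxd)⟩, hxd⟩

lemma exists_mem_descLe_of_descLt {z x : A} {w : Multiset A} (hw : P.IsChildSet z w)
    (hx : P.descLt x z) : ∃ c ∈ w, P.descLe x c := by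
  obtain ⟨d, hdz, hxd⟩ := P.exists_blt_of_descLt hx
  obtain ⟨s, c, hxs, hsc, hcw⟩ := P.mem_of_multLe (hw.2 d hdz) hxd
  exact ⟨c, hcw, s, hsc, hxs⟩

lemma exists_isChildSet_of_blt (hfin : P.IsFinite)
    (hchildren : ∀ x, ¬ P.IsLeaf x → ∃ u, P.IsChildSet x u) {a z : A} {b : Multiset A}
    (hb : P.blt b z) (ha : a ∈ b) : ∃ x u, P.IsChildSet x u ∧ a ∈ u := by
  induction z using (P.wellFounded_descLt hfin).induction generalizing b with
  | _ z ih =>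
  obtain ⟨w, hw⟩ := hchildren z fun hleaf => hleaf b hb
  obtain ⟨s, c, has, hsc, hcw⟩ := P.mem_of_multLe (hw.2 b hb) ha
  by_cases hs : s = {c}
  · exact ⟨z, w, hw, Multiset.mem_singleton.1 (hs ▸ has) ▸ hcw⟩
  · exact ih c (P.descLt_of_blt_of_mem hfin hw.1 hcw) ⟨hsc, hs⟩ has

lemma not_descLt_of_isChildSet (hfin : P.IsFinite) (hsimple : P.IsSimple) {a x x' : A} {u u' : Multiset A}
    (hu : P.IsChildSet x u) (ha : a ∈ u) (hu' : P.blt u' x') (ha' : a ∈ u') :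
    ¬ P.descLt x' x := by
  intro hx'x
  obtain ⟨c, hcu, hx'c⟩ := P.exists_mem_descLe_of_descLt hu hx'x
  have hax' := P.descLt_of_blt_of_mem hfin hu' ha'
  obtain rfl : a = c :=
    P.eq_of_descLe_of_mem hsimple hu.1.1 ha hcu (P.descLe_refl a) (P.descLe_trans hax'.1 hx'c)
  exact hax'.2 (P.descLe_antisymm hfin hax'.1 hx'c)

lemma eq_of_isChildSet_of_mem (hfin : P.IsFinite) (hsimple : P.IsSimple)
    (hchildren : ∀ x, ¬ P.IsLeaf x → ∃ u, P.IsChildSet x u)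
    {a x x' : A} {u u' : Multiset A} (hu : P.IsChildSet x u) (ha : a ∈ u)
    (hu' : P.IsChildSet x' u') (ha' : a ∈ u') (hcommon : ∃ z, P.descLe x z ∧ P.descLe x' z) :
    x = x' := by
  obtain ⟨z, ⟨hxz, hx'z⟩, hmin⟩ :=
    (P.wellFounded_descLt hfin).has_min {z | P.descLe x z ∧ P.descLe x' z} hcommon
  by_cases hx : x = z
  · subst hx
    by_contra hne
    exact P.not_descLt_of_isChildSet hfin hsimple hu ha hu'.1 ha' ⟨hx'z, Ne.symm hne⟩
  by_cases hx' : x' = z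
  · subst hx'
    exact absurd ⟨hxz, hx⟩ (P.not_descLt_of_isChildSet hfin hsimple hu' ha' hu.1 ha)
  obtain ⟨d, hdz, -⟩ := P.exists_blt_of_descLt ⟨hxz, hx⟩
  obtain ⟨w, hw⟩ := hchildren z fun hleaf => hleaf d hdz
  obtain ⟨c, hcw, hxc⟩ := P.exists_mem_descLe_of_descLt hw ⟨hxz, hx⟩
  obtain ⟨c', hc'w, hx'c'⟩ := P.exists_mem_descLe_of_descLt hw ⟨hx'z, hx'⟩
  obtain rfl : c = c' := P.eq_of_descLe_of_mem hsimple hw.1.1 hcw hc'w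
    (P.descLe_trans (P.descLe_of_blt_of_mem hu.1 ha) hxc)
    (P.descLe_trans (P.descLe_of_blt_of_mem hu'.1 ha') hx'c')
  exact absurd (P.descLt_of_blt_of_mem hfin hw.1 hcw) (hmin c ⟨hxc, hx'c'⟩)

end BroadPoset

/-- In a dendroidally ordered set, every non-root edge is the child of a
unique edge, its parent. -/
theorem unique_parent {A : Type} (P : BroadPoset A) (hP : P.IsDendroidal)
    (r : A) (hr : P.IsRoot r) (a : A) (ha : a ≠ r) :
    ∃! x : A, ∃ u : Multiset A, P.IsChildSet x u ∧ a ∈ u := by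
  obtain ⟨b, hb, hab⟩ := P.exists_blt_of_descLt ⟨hr a, ha⟩
  obtain ⟨x, u, hu, hau⟩ := P.exists_isChildSet_of_blt hP.finite hP.children hb hab
  refine ⟨x, ⟨u, hu, hau⟩, fun y ⟨v, hv, hav⟩ => ?_⟩
  exact P.eq_of_isChildSet_of_mem hP.finite hP.simple hP.children hv hav hu hau ⟨r, hr y, hr x⟩
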